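/- Let S be a valid solution of an Evolomino instance and let A = a₁,…,a_L be one of its arrows such that every white cell of the board orthogonally adjacent to an interior arrow cell a_i (1 < i < L) and distinct from a_{i−1} and a_{i+1} is shaded. Suppose moreover that V ⊆ S, where V is a vertical segment of length s ≥ 2 with a_L ∈ V, the only cell of V lying on any arrow is a_L, and every white cell of the board orthogonally adjacent to V and not in V lies on the arrow A. Then the block of S containing a_L is exactly V, exactly two blocks of S meet A, and the first block B₁ (in arrow order) is a vertical segment of length s − 1 containing exactly one cell of A. -/

import Mathlib

open Pointwise

/-- A cell of the (infinite) grid. -/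
abbrev Cell : Type := ℤ × ℤ

/-- Orthogonal adjacency: the two cells differ by exactly 1 in exactly one coordinate. -/
def Adj (c d : Cell) : Prop :=
  (c.1 = d.1 ∧ (c.2 - d.2 = 1 ∨ d.2 - c.2 = 1)) ∨
  (c.2 = d.2 ∧ (c.1 - d.1 = 1 ∨ d.1 - c.1 = 1))

/-- The `p × q` board `{1,…,p} × {1,…,q} ⊆ ℤ × ℤ`. -/
def board (p q : ℕ) : Set Cell :=
  {c | 1 ≤ c.1 ∧ c.1 ≤ (p : ℤ) ∧ 1 ≤ c.2 ∧ c.2 ≤ (q : ℤ)}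

/-- The data of an Evolomino instance. -/
structure EvoInstance where
  p : ℕ
  q : ℕ
  shaded : Set Cell
  presq : Finset Cell
  arrows : List (List Cell)

/-- A cell is white if it lies on the board and is not shaded. -/
def EvoInstance.White (I : EvoInstance) (c : Cell) : Prop :=
  c ∈ board I.p I.q ∧ c ∉ I.shaded

/-- A legal arrow: a duplicate-free list of at least two white cells in which
consecutive cells are orthogonally adjacent. -/
def IsArrow (I : EvoInstance) (A : List Cell) : Prop :=
  A.Nodup ∧ 2 ≤ A.length ∧ (∀ c ∈ A, I.White c) ∧ A.Chain' Adj

/-- Well-formedness of an Evolomino instance: positive dimensions, shaded cells on the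
board, pre-drawn squares white, every arrow legal, and no cell on two arrows. -/
def EvoInstance.WellFormed (I : EvoInstance) : Prop :=
  0 < I.p ∧ 0 < I.q ∧ I.shaded ⊆ board I.p I.q ∧
  (∀ c ∈ I.presq, I.White c) ∧
  (∀ A ∈ I.arrows, IsArrow I A) ∧
  I.arrows.Pairwise (fun A B => ∀ c ∈ A, c ∉ B)

/-- A solution: a set of white cells containing the pre-drawn squares. -/
def IsSolution (I : EvoInstance) (S : Set Cell) : Prop :=
  (∀ c ∈ S, I.White c) ∧ ↑I.presq ⊆ S

/-- Connectivity inside `S` via orthogonal adjacency. -/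
def ConnIn (S : Set Cell) : Cell → Cell → Prop :=
  Relation.ReflTransGen (fun x y => x ∈ S ∧ y ∈ S ∧ Adj x y)

/-- `B` is a block of `S`: a connected component of `S` under orthogonal adjacency. -/
def IsBlock (S : Set Cell) (B : Set Cell) : Prop :=
  ∃ c ∈ S, B = {d | d ∈ S ∧ ConnIn S c d}

/-- The cell `c` lies on some arrow of the instance. -/
def OnArrow (I : EvoInstance) (c : Cell) : Prop :=
  ∃ A ∈ I.arrows, c ∈ A

/-- The set `B` meets the arrow `A`. -/
def Meets (B : Set Cell) (A : List Cell) : Prop :=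
  ∃ c ∈ B, c ∈ A

/-- The first position along the arrow `A` at which a cell of `B` occurs. -/
noncomputable def firstHit (A : List Cell) (B : Set Cell) : ℕ :=
  sInf {i | ∃ h : i < A.length, A.get ⟨i, h⟩ ∈ B}

/-- `B` and `B'` are consecutive blocks of `S` (in arrow order) meeting the arrow `A`. -/
def Consecutive (S : Set Cell) (A : List Cell) (B B' : Set Cell) : Prop :=
  IsBlock S B ∧ IsBlock S B' ∧ Meets B A ∧ Meets B' A ∧
  firstHit A B < firstHit A B' ∧
  ∀ B'', IsBlock S B'' → Meets B'' A →
    firstHit A B'' ≤ firstHit A B ∨ firstHit A B' ≤ firstHit A B''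

/-- A valid solution of an Evolomino instance. -/
def IsValidSolution (I : EvoInstance) (S : Set Cell) : Prop :=
  IsSolution I S ∧
  (∀ B, IsBlock S B → ∃! c, c ∈ B ∧ OnArrow I c) ∧
  (∀ A ∈ I.arrows, ∃ B B', IsBlock S B ∧ IsBlock S B' ∧ B ≠ B' ∧
    Meets B A ∧ Meets B' A) ∧
  (∀ A ∈ I.arrows, ∀ B B', Consecutive S A B B' →
    B'.ncard = B.ncard + 1 ∧ ∃ v : Cell, v +ᵥ B ⊆ B')

/-- The arrow `A` is fenced: every board cell orthogonally adjacent to an interior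
arrow cell `a_i` (`1 < i < L`) and distinct from `a_{i-1}` and `a_{i+1}` is shaded. -/
def Fenced (I : EvoInstance) (A : List Cell) : Prop :=
  ∀ i : ℕ, ∀ _h1 : 0 < i, ∀ h2 : i + 1 < A.length,
    ∀ c ∈ board I.p I.q,
      Adj c (A.get ⟨i, by omega⟩) →
      c ≠ A.get ⟨i - 1, by omega⟩ →
      c ≠ A.get ⟨i + 1, h2⟩ →
      c ∈ I.shaded

/-- A vertical segment of length `ℓ`: the cells `(x, y)` with `y₀ ≤ y < y₀ + ℓ`. -/
def IsVertSeg (B : Set Cell) (ℓ : ℕ) : Prop :=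
  ∃ x y₀ : ℤ, B = {c : Cell | c.1 = x ∧ y₀ ≤ c.2 ∧ c.2 < y₀ + ℓ}

/-- A horizontal segment of length `ℓ`: the cells `(x, y)` with `x₀ ≤ x < x₀ + ℓ`. -/
def IsHorizSeg (B : Set Cell) (ℓ : ℕ) : Prop :=
  ∃ x₀ y : ℤ, B = {c : Cell | c.2 = y ∧ x₀ ≤ c.1 ∧ c.1 < x₀ + ℓ}

/-!
Every cell of `S` adjacent to `V` but outside it lies on `A`, and a block contains only one arrow
cell, so the block of `a_L` cannot leave the (connected) segment `V`: it is `V`. A block through an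
interior cell `a_j` of a fenced arrow can only grow through the white neighbours `a_{j±1}`, which are
arrow cells, so it is the single cell `a_j`. The block following the first block `B₁` along `A` has
`|B₁| + 1 ≥ 2` cells, hence starts at `a_L` and is `V`; consecutiveness then leaves no room for a
third block. Finally a translate of `B₁` lies in `V`, so `B₁` is a connected set of `s - 1` cells
in one column, i.e. a vertical segment.
-/

lemma Adj.symm {c d : Cell} (h : Adj c d) : Adj d c := by
  unfold Adj at *; omega

lemma ConnIn.symm {S : Set Cell} {c d : Cell} (h : ConnIn S c d) : ConnIn S d c := by
  induction h with
  | refl => exact .refl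
  | tail _ hwe ih => exact ih.head ⟨hwe.2.1, hwe.1, hwe.2.2.symm⟩

lemma connIn_of_column {S : Set Cell} {x a b : ℤ} (hab : a ≤ b)
    (hS : ∀ y, a ≤ y → y ≤ b → ((x, y) : Cell) ∈ S) : ConnIn S (x, a) (x, b) := by
  induction b, hab using Int.leInduction with
  | base => exact .refl
  | succ b hab ih =>
    refine (ih fun y h₁ h₂ => hS y h₁ (by omega)).tail
      ⟨hS b hab (by omega), hS (b + 1) (by omega) le_rfl, ?_⟩
    unfold Adj
    omega

lemma IsSolution.finite {I : EvoInstance} {S : Set Cell} (hS : IsSolution I S) : S.Finite := by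
  refine (Set.finite_Icc ((1, 1) : Cell) (I.p, I.q)).subset fun c hc => ?_
  obtain ⟨⟨h₁, h₂, h₃, h₄⟩, -⟩ := hS.1 c hc
  exact ⟨⟨h₁, h₃⟩, h₂, h₄⟩

section Blocks

variable {S B B' V : Set Cell} {c d : Cell}

lemma IsBlock.subset (hB : IsBlock S B) : B ⊆ S := by
  obtain ⟨_, _, rfl⟩ := hB
  exact fun _ hd => hd.1

lemma exists_isBlock_mem (hc : c ∈ S) : ∃ B, IsBlock S B ∧ c ∈ B :=
  ⟨_, ⟨c, hc, rfl⟩, hc, .refl⟩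

lemma IsBlock.eq_component (hB : IsBlock S B) (hc : c ∈ B) :
    B = {d | d ∈ S ∧ ConnIn S c d} := by
  obtain ⟨c₀, -, rfl⟩ := hB
  ext d
  exact ⟨fun ⟨hd, h₀d⟩ => ⟨hd, hc.2.symm.trans h₀d⟩, fun ⟨hd, hcd⟩ => ⟨hd, hc.2.trans hcd⟩⟩

lemma IsBlock.eq_of_mem (hB : IsBlock S B) (hB' : IsBlock S B') (hc : c ∈ B) (hc' : c ∈ B') :
    B = B' := by
  rw [hB.eq_component hc, hB'.eq_component hc']

lemma IsBlock.subset_diff (hB : IsBlock S B) (hB' : IsBlock S B') (hne : B ≠ B') :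
    B ⊆ S \ B' :=
  fun _ hd => ⟨hB.subset hd, fun hd' => hne (hB.eq_of_mem hB' hd hd')⟩

lemma IsBlock.mem_of_adj (hB : IsBlock S B) (hc : c ∈ B) (hd : d ∈ S) (hcd : Adj c d) : d ∈ B := by
  rw [hB.eq_component hc]
  exact ⟨hd, .single ⟨hB.subset hc, hd, hcd⟩⟩

lemma IsBlock.subset_of_closed (hB : IsBlock S B) (hcB : c ∈ B) (hcV : c ∈ V)
    (hV : ∀ d ∈ V, ∀ e ∈ B, Adj d e → e ∈ V) : B ⊆ V := by
  have hcomp := hB.eq_component hcB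
  intro d hd
  rw [hcomp] at hd
  obtain ⟨-, hcd⟩ := hd
  induction hcd with
  | refl => exact hcV
  | tail hcw hwe ih => exact hV _ ih _ (hcomp ▸ ⟨hwe.2.1, hcw.tail hwe⟩) hwe.2.2

lemma IsBlock.mem_of_connIn_of_column {x : ℤ} (hB : IsBlock S B) (hcol : ∀ c ∈ B, c.1 = x)
    (hc : c ∈ B) (hcd : ConnIn S c d) {m : ℤ} (hcm : c.2 ≤ m) (hmd : m ≤ d.2) : (x, m) ∈ B := by
  have hcomp := hB.eq_component hc
  induction hcd generalizing m with
  | refl =>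
    rw [← hcol c hc, show m = c.2 by omega]
    exact hc
  | @tail w e hcw hwe ih =>
    by_cases hmw : m ≤ w.2
    · exact ih hcm hmw
    have hwB : w ∈ B := hcomp ▸ ⟨hwe.1, hcw⟩
    have heB : e ∈ B := hcomp ▸ ⟨hwe.2.1, hcw.tail hwe⟩
    have hwx := hcol w hwB
    have hex := hcol e heB
    have hme : m = e.2 := by unfold Adj at hwe; omega
    rwa [← hex, hme]

end Blocks

section Segments

variable {S B V : Set Cell} {c : Cell} {ℓ : ℕ}

lemma IsVertSeg.ncard (hV : IsVertSeg V ℓ) : V.ncard = ℓ := by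
  obtain ⟨x, y₀, rfl⟩ := hV
  have himage : {c : Cell | c.1 = x ∧ y₀ ≤ c.2 ∧ c.2 < y₀ + ℓ} =
      (fun y => ((x, y) : Cell)) '' Set.Ico y₀ (y₀ + ℓ) := by
    ext ⟨a, b⟩
    constructor
    · rintro ⟨rfl, hb⟩
      exact ⟨b, hb, rfl⟩
    · rintro ⟨y, hy, hxy⟩
      obtain ⟨rfl, rfl⟩ := Prod.mk.inj hxy
      exact ⟨rfl, hy⟩
  rw [himage, Set.ncard_image_of_injective _ (Prod.mk_right_injective x), ← Finset.coe_Ico,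
    Set.ncard_coe_finset, Int.card_Ico]
  omega

lemma IsVertSeg.subset_block (hV : IsVertSeg V ℓ) (hVS : V ⊆ S) (hB : IsBlock S B)
    (hcV : c ∈ V) (hcB : c ∈ B) : V ⊆ B := by
  obtain ⟨x, y₀, rfl⟩ := hV
  have hS : ∀ y, y₀ ≤ y → y < y₀ + ℓ → ((x, y) : Cell) ∈ S := fun y h₁ h₂ => hVS ⟨rfl, h₁, h₂⟩
  rintro ⟨x', y⟩ ⟨hx', hy⟩
  obtain ⟨hc₁, hc₂⟩ := hcV
  rw [hB.eq_component hcB]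
  refine ⟨hVS ⟨hx', hy⟩, ?_⟩
  rw [show c = (x, c.2) from Prod.ext hc₁ rfl, show x' = x from hx']
  rcases le_total c.2 y with hcy | hyc
  · exact connIn_of_column hcy fun z h₁ h₂ => hS z (by omega) (by simp only at hy; omega)
  · exact (connIn_of_column hyc fun z h₁ h₂ => hS z (by simp only at hy; omega) (by omega)).symm

lemma IsBlock.exists_isVertSeg_of_column {x : ℤ} (hB : IsBlock S B) (hfin : B.Finite)
    (hne : B.Nonempty) (hcol : ∀ c ∈ B, c.1 = x) : ∃ ℓ, IsVertSeg B ℓ := by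
  obtain ⟨lo, hlo, hlo_le⟩ := Set.exists_min_image B Prod.snd hfin hne
  obtain ⟨hi, hhi, hle_hi⟩ := Set.exists_max_image B Prod.snd hfin hne
  have hconn : ConnIn S lo hi := (hB.eq_component hlo ▸ hhi).2
  refine ⟨(hi.2 - lo.2 + 1).toNat, x, lo.2, Set.ext fun ⟨a, b⟩ => ⟨fun hab => ?_, ?_⟩⟩
  · have := hlo_le _ hab
    have := hle_hi _ hab
    exact ⟨hcol _ hab, by simp only at *; omega⟩
  · rintro ⟨rfl, h₁, h₂⟩
    exact hB.mem_of_connIn_of_column hcol hlo hconn h₁ (by omega)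

lemma IsBlock.isVertSeg_ncard_of_vadd_subset (hB : IsBlock S B) (hfin : B.Finite)
    (hne : B.Nonempty) (hV : IsVertSeg V ℓ) {v : Cell} (hv : v +ᵥ B ⊆ V) :
    IsVertSeg B B.ncard := by
  obtain ⟨x, y₀, rfl⟩ := hV
  have hcol : ∀ c ∈ B, c.1 = x - v.1 := fun c hc => by
    have := (hv (Set.vadd_mem_vadd_set hc)).1
    simp only [vadd_eq_add, Prod.fst_add] at this
    omega
  obtain ⟨ℓ', hℓ'⟩ := hB.exists_isVertSeg_of_column hfin hne hcol
  rwa [hℓ'.ncard]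

end Segments

section FirstHit

variable {S B B' C : Set Cell} {A : List Cell}

lemma firstHit_le {i : ℕ} (hi : i < A.length) (h : A[i] ∈ B) : firstHit A B ≤ i :=
  Nat.sInf_le ⟨hi, h⟩

lemma Meets.getElem_firstHit_mem (h : Meets B A) :
    ∃ hi : firstHit A B < A.length, A[firstHit A B] ∈ B := by
  obtain ⟨c, hcB, hcA⟩ := h
  obtain ⟨i, hi, rfl⟩ := List.getElem_of_mem hcA
  exact Nat.sInf_mem (s := {i | ∃ h : i < A.length, A[i] ∈ B}) ⟨i, hi, hcB⟩

lemma firstHit_le_firstHit (hBB' : B ⊆ B') (h : Meets B A) : firstHit A B' ≤ firstHit A B :=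
  let ⟨hi, hmem⟩ := h.getElem_firstHit_mem
  firstHit_le hi (hBB' hmem)

lemma Meets.getLast_mem (h : Meets B A) (hA : A ≠ []) (hlast : firstHit A B + 1 = A.length) :
    A.getLast hA ∈ B := by
  obtain ⟨_, hmem⟩ := h.getElem_firstHit_mem
  simpa only [List.getLast_eq_getElem, show A.length - 1 = firstHit A B by omega]

lemma IsBlock.eq_of_firstHit_eq (hB : IsBlock S B) (hB' : IsBlock S B') (hBA : Meets B A)
    (hB'A : Meets B' A) (h : firstHit A B = firstHit A B') : B = B' :=
  let ⟨_, hmem⟩ := hBA.getElem_firstHit_mem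
  let ⟨_, hmem'⟩ := hB'A.getElem_firstHit_mem
  hB.eq_of_mem hB' hmem (by simp only [h] at hmem ⊢; exact hmem')

lemma exists_isBlock_firstHit_le (hSA : Meets S A) :
    ∃ B, IsBlock S B ∧ Meets B A ∧
      ∀ B', IsBlock S B' → Meets B' A → firstHit A B ≤ firstHit A B' := by
  obtain ⟨hi, hmem⟩ := hSA.getElem_firstHit_mem
  obtain ⟨B, hB, hmemB⟩ := exists_isBlock_mem hmem
  exact ⟨B, hB, ⟨_, hmemB, List.getElem_mem hi⟩, fun B' hB' hB'A =>
    (firstHit_le hi hmemB).trans (firstHit_le_firstHit hB'.subset hB'A)⟩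

/-- The block after the first one is the block of the first arrow cell of `S` outside it. -/
lemma exists_consecutive (hB : IsBlock S B) (hBA : Meets B A)
    (hfirst : ∀ B', IsBlock S B' → Meets B' A → firstHit A B ≤ firstHit A B')
    (hB' : IsBlock S B') (hB'A : Meets B' A) (hne : B' ≠ B) : ∃ C, Consecutive S A B C := by
  have hrest : Meets (S \ B) A :=
    let ⟨c, hc, hcA⟩ := hB'A
    ⟨c, hB'.subset_diff hB hne hc, hcA⟩
  obtain ⟨hj, hjS, hjB⟩ := hrest.getElem_firstHit_mem
  obtain ⟨C, hC, hjC⟩ := exists_isBlock_mem hjS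
  have hCA : Meets C A := ⟨_, hjC, List.getElem_mem hj⟩
  have hCB : C ≠ B := fun h => hjB (h ▸ hjC)
  have hCfirst : firstHit A C = firstHit A (S \ B) :=
    (firstHit_le hj hjC).antisymm (firstHit_le_firstHit (hC.subset_diff hB hCB) hCA)
  refine ⟨C, hB, hC, hBA, hCA, (hfirst C hC hCA).lt_of_ne
    fun h => hCB (hC.eq_of_firstHit_eq hB hCA hBA h.symm), fun B'' hB'' hB''A => ?_⟩
  by_cases h : B'' = B
  · exact .inl (by rw [h])
  · exact .inr (hCfirst ▸ firstHit_le_firstHit (hB''.subset_diff hB h) hB''A)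

end FirstHit

section Validity

variable {I : EvoInstance} {S B C V : Set Cell} {A : List Cell} {c d : Cell}

lemma IsValidSolution.eq_of_onArrow (hS : IsValidSolution I S) (hB : IsBlock S B) (hc : c ∈ B)
    (hd : d ∈ B) (hcA : OnArrow I c) (hdA : OnArrow I d) : c = d :=
  (hS.2.1 B hB).unique ⟨hc, hcA⟩ ⟨hd, hdA⟩

lemma IsValidSolution.eq_of_isVertSeg {ℓ : ℕ} (hS : IsValidSolution I S) (hV : IsVertSeg V ℓ)
    (hVS : V ⊆ S) (hexit : ∀ e ∈ S, (∃ d ∈ V, Adj e d) → e ∉ V → OnArrow I e)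
    (hB : IsBlock S B) (hcV : c ∈ V) (hcB : c ∈ B) (hc : OnArrow I c) : B = V := by
  refine (hB.subset_of_closed hcB hcV fun d hd e he hde => ?_).antisymm
    (hV.subset_block hVS hB hcV hcB)
  by_contra heV
  have hec := hS.eq_of_onArrow hB he hcB (hexit e (hB.subset he) ⟨d, hd, hde.symm⟩ heV) hc
  exact heV (hec ▸ hcV)

lemma IsValidSolution.eq_singleton_of_fenced (hS : IsValidSolution I S) (hA : A ∈ I.arrows)
    (hfence : Fenced I A) {j : ℕ} (hj₀ : 0 < j) (hj : j + 1 < A.length) (hB : IsBlock S B)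
    (hjB : A[j] ∈ B) : B = {A[j]} := by
  refine (hB.subset_of_closed (V := {A[j]}) hjB rfl fun d hd e he hde => ?_).antisymm
    (Set.singleton_subset_iff.mpr hjB)
  obtain rfl : d = A[j] := hd
  by_contra hej
  have hearrow : ¬OnArrow I e := fun heA =>
    hej (hS.eq_of_onArrow hB he hjB heA ⟨A, hA, List.getElem_mem _⟩)
  have hwhite := hS.1.1 e (hB.subset he)
  refine hwhite.2 (hfence j hj₀ hj e hwhite.1 hde.symm ?_ ?_) <;>
    exact fun h => hearrow ⟨A, hA, h ▸ List.get_mem _ _⟩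

lemma IsValidSolution.firstHit_add_one_eq_length_of_fenced (hS : IsValidSolution I S)
    (hA : A ∈ I.arrows) (hfence : Fenced I A) (hcon : Consecutive S A B C) :
    firstHit A C + 1 = A.length := by
  have hcard := (hS.2.2.2 A hA B C hcon).1
  obtain ⟨hB, hC, ⟨c, hc, -⟩, hCA, hlt, -⟩ := hcon
  obtain ⟨hj, hjC⟩ := hCA.getElem_firstHit_mem
  by_contra hne
  rw [hS.eq_singleton_of_fenced hA hfence (by omega) (by omega) hC hjC, Set.ncard_singleton]
    at hcard
  have hBempty : B = ∅ := (Set.ncard_eq_zero (hS.1.finite.subset hB.subset)).mp (by omega)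
  exact Set.notMem_empty c (hBempty ▸ hc)

end Validity

theorem evolomino_fenced_arrow_vertical_end_general
    (I : EvoInstance)
    (S : Set Cell) (hS : IsValidSolution I S)
    (A : List Cell) (hA : A ∈ I.arrows) (hAne : A ≠ [])
    (hfence : Fenced I A)
    (V : Set Cell) (s : ℕ) (hVseg : IsVertSeg V s)
    (hVS : V ⊆ S) (haL : A.getLast hAne ∈ V)
    (hnbr : ∀ c : Cell, I.White c → (∃ d ∈ V, Adj c d) → c ∉ V → c ∈ A) :
    (∀ B, IsBlock S B → A.getLast hAne ∈ B → B = V) ∧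
    ∃ B₁ B₂ : Set Cell,
      IsBlock S B₁ ∧ IsBlock S B₂ ∧ B₁ ≠ B₂ ∧ Meets B₁ A ∧ Meets B₂ A ∧
      (∀ B, IsBlock S B → Meets B A → B = B₁ ∨ B = B₂) ∧
      firstHit A B₁ < firstHit A B₂ ∧
      IsVertSeg B₁ (s - 1) ∧
      (∃! c, c ∈ B₁ ∧ c ∈ A) := by
  have hblockV : ∀ B, IsBlock S B → A.getLast hAne ∈ B → B = V := fun B hB haLB =>
    hS.eq_of_isVertSeg hVseg hVS (fun e he hadj heV => ⟨A, hA, hnbr e (hS.1.1 e he) hadj heV⟩)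
      hB haL haLB ⟨A, hA, List.getLast_mem hAne⟩
  obtain ⟨B₁, hB₁, hB₁A, hfirst⟩ :=
    exists_isBlock_firstHit_le (S := S) ⟨_, hVS haL, List.getLast_mem hAne⟩
  obtain ⟨D, hD, hDA, hDB₁⟩ : ∃ D, IsBlock S D ∧ Meets D A ∧ D ≠ B₁ := by
    obtain ⟨D, D', hD, hD', hne, hDA, hD'A⟩ := hS.2.2.1 A hA
    by_cases h : D = B₁
    · exact ⟨D', hD', hD'A, fun h' => hne (h.trans h'.symm)⟩
    · exact ⟨D, hD, hDA, h⟩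
  obtain ⟨C, hcon⟩ := exists_consecutive hB₁ hB₁A hfirst hD hDA hDB₁
  have hClast := hS.firstHit_add_one_eq_length_of_fenced hA hfence hcon
  obtain ⟨hcard, v, hv⟩ := hS.2.2.2 A hA B₁ C hcon
  obtain ⟨-, hC, -, hCA, hlt, hbetween⟩ := hcon
  obtain rfl : C = V := hblockV C hC (hCA.getLast_mem hAne hClast)
  refine ⟨hblockV, B₁, C, hB₁, hC, fun h => hlt.ne (congrArg _ h), hB₁A, hCA,
    fun B hB hBA => ?_, hlt, ?_, ?_⟩
  · rcases hbetween B hB hBA with h | h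
    · exact .inl (hB.eq_of_firstHit_eq hB₁ hBA hB₁A (h.antisymm (hfirst B hB hBA)))
    · obtain ⟨hi, -⟩ := hBA.getElem_firstHit_mem
      exact .inr (hblockV B hB (hBA.getLast_mem hAne (by omega)))
  · have hB₁ne : B₁.Nonempty := let ⟨c, hc, _⟩ := hB₁A; ⟨c, hc⟩
    have hseg := hB₁.isVertSeg_ncard_of_vadd_subset (hS.1.finite.subset hB₁.subset) hB₁ne hVseg hv
    rwa [show B₁.ncard = s - 1 by have := hVseg.ncard; omega] at hseg
  · obtain ⟨c, hc, hcA⟩ := hB₁A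
    exact ⟨c, ⟨hc, hcA⟩, fun d hd => hS.eq_of_onArrow hB₁ hd.1 hc ⟨A, hA, hd.2⟩ ⟨A, hA, hcA⟩⟩

/-- If a fenced arrow `A` of a valid solution `S` ends at `a_L`, and
`V ⊆ S` is a vertical segment of length `s ≥ 2` containing `a_L`, whose only cell on
any arrow is `a_L`, and all of whose white neighbours outside `V` lie on `A`, then the
block of `S` containing `a_L` is exactly `V`, exactly two blocks of `S` meet `A`, and
the first of them (in arrow order) is a vertical segment of length `s - 1` containing
exactly one cell of `A`. -/
theorem evolomino_fenced_arrow_vertical_end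
    (I : EvoInstance) (hWF : I.WellFormed)
    (S : Set Cell) (hS : IsValidSolution I S)
    (A : List Cell) (hA : A ∈ I.arrows) (hAne : A ≠ [])
    (hfence : Fenced I A)
    (V : Set Cell) (s : ℕ) (hs : 2 ≤ s) (hVseg : IsVertSeg V s)
    (hVS : V ⊆ S) (haL : A.getLast hAne ∈ V)
    (honly : ∀ c ∈ V, OnArrow I c → c = A.getLast hAne)
    (hnbr : ∀ c : Cell, I.White c → (∃ d ∈ V, Adj c d) → c ∉ V → c ∈ A) :
    (∀ B, IsBlock S B → A.getLast hAne ∈ B → B = V) ∧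
    ∃ B₁ B₂ : Set Cell,
      IsBlock S B₁ ∧ IsBlock S B₂ ∧ B₁ ≠ B₂ ∧ Meets B₁ A ∧ Meets B₂ A ∧
      (∀ B, IsBlock S B → Meets B A → B = B₁ ∨ B = B₂) ∧
      firstHit A B₁ < firstHit A B₂ ∧
      IsVertSeg B₁ (s - 1) ∧
      (∃! c, c ∈ B₁ ∧ c ∈ A) :=
  evolomino_fenced_arrow_vertical_end_general I S hS A hA hAne hfence V s hVseg hVS haL hnbr
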